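/- For any complex n×n matrix A, any 1 ≤ k ≤ n, and any n×(n−k+1) isometry M, every element λ of Λ_k(A) satisfies |λ| ≤ r(M*AM), where r denotes the numerical radius of M*AM; consequently sup{|λ| : λ ∈ Λ_k(A)} ≤ inf over isometries M of r(M*AM). -/

import Mathlib

open Matrix

noncomputable section

/-- The classical numerical range F(B) = {x* B x : x* x = 1}. -/
def numRange {m : ℕ} (B : Matrix (Fin m) (Fin m) ℂ) : Set ℂ :=
  {z | ∃ x : Fin m → ℂ, star x ⬝ᵥ x = 1 ∧ z = star x ⬝ᵥ B.mulVec x}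

/-- The rank-k numerical range Λ_k(A). -/
def rankNumRange {n : ℕ} (A : Matrix (Fin n) (Fin n) ℂ) (k : ℕ) : Set ℂ :=
  {l | ∃ X : Matrix (Fin n) (Fin k) ℂ, Xᴴ * X = 1 ∧ Xᴴ * A * X = l • 1}

/-- The numerical radius r(B) = sup { |z| : z ∈ F(B) }. -/
def numRadius {m : ℕ} (B : Matrix (Fin m) (Fin m) ℂ) : ℝ :=
  sSup ((fun z : ℂ => ‖z‖) '' numRange B)

/-! If `l ∈ Λ_k(A)` is witnessed by an isometry `X`, the range of `X` (dimension `k`) and that of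
the isometry `M` (dimension `n - k + 1`) meet in a unit vector `x = X u = M v`, since
`k + (n - k + 1) > n`. Then `l = u* (X* A X) u = x* A x = v* (M* A M) v` lies in the numerical range
of `M* A M`, so `|l| ≤ r(M* A M)`; taking the supremum over `l` and the infimum over `M` gives the
second claim, the infimum being over a nonempty set because `n - k + 1 ≤ n`.
-/

section DotProduct

variable {ι κ R : Type*} [Fintype ι] [Fintype κ]

theorem star_dotProduct_conjTranspose_mul_mul_mulVec [CommSemiring R] [StarRing R]
    (X : Matrix ι κ R) (B : Matrix ι ι R) (u : κ → R) :
    star u ⬝ᵥ (Xᴴ * B * X) *ᵥ u = star (X *ᵥ u) ⬝ᵥ B *ᵥ (X *ᵥ u) := by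
  rw [star_mulVec, ← dotProduct_mulVec, mulVec_mulVec, mulVec_mulVec, Matrix.mul_assoc]

theorem star_mulVec_dotProduct_mulVec_of_conjTranspose_mul_self [CommSemiring R] [StarRing R]
    [DecidableEq ι] [DecidableEq κ] {X : Matrix ι κ R} (hX : Xᴴ * X = 1) (u : κ → R) :
    star (X *ᵥ u) ⬝ᵥ X *ᵥ u = star u ⬝ᵥ u := by
  simpa [hX] using (star_dotProduct_conjTranspose_mul_mul_mulVec X 1 u).symm

theorem star_dotProduct_self_eq_sum_sq_norm (x : ι → ℂ) :
    star x ⬝ᵥ x = ((∑ i, ‖x i‖ ^ 2 : ℝ) : ℂ) := by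
  simp [dotProduct, Complex.conj_mul']

end DotProduct

theorem Submodule.inf_ne_bot_of_finrank_lt_add {K V : Type*} [DivisionRing K] [AddCommGroup V]
    [Module K V] [FiniteDimensional K V] {s t : Submodule K V}
    (h : Module.finrank K V < Module.finrank K s + Module.finrank K t) : s ⊓ t ≠ ⊥ := by
  intro hbot
  have hdim := Submodule.finrank_sup_add_finrank_inf_eq s t
  rw [hbot, finrank_bot, add_zero] at hdim
  have := (s ⊔ t).finrank_le
  omega

theorem Matrix.rank_eq_of_mul_eq_one {K : Type*} [Field K] {m n : ℕ}
    {X : Matrix (Fin m) (Fin n) K} {Y : Matrix (Fin n) (Fin m) K} (h : Y * X = 1) :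
    X.rank = n := by
  refine le_antisymm X.rank_le_width ?_
  simpa [h] using rank_mul_le_right Y X

theorem exists_conjTranspose_mul_self_eq_one {R : Type*} [Semiring R] [StarRing R] {m n : ℕ}
    (hmn : m ≤ n) : ∃ M : Matrix (Fin n) (Fin m) R, Mᴴ * M = 1 := by
  refine ⟨(1 : Matrix (Fin n) (Fin n) R).submatrix id (Fin.castLE hmn), ?_⟩
  rw [conjTranspose_submatrix, conjTranspose_one, ← submatrix_mul _ _ _ _ _ Function.bijective_id,
    Matrix.mul_one]
  exact submatrix_one_embedding (Fin.castLEEmb hmn)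

section NumRange

variable {m : ℕ}

theorem norm_le_one_of_star_dotProduct_self_eq_one {x : Fin m → ℂ} (hx : star x ⬝ᵥ x = 1)
    (i : Fin m) : ‖x i‖ ≤ 1 := by
  have hsum : ∑ j, ‖x j‖ ^ 2 = 1 := by
    exact_mod_cast (star_dotProduct_self_eq_sum_sq_norm x).symm.trans hx
  rw [← sq_le_one_iff₀ (norm_nonneg _), ← hsum]
  exact Finset.single_le_sum (fun j _ => sq_nonneg ‖x j‖) (Finset.mem_univ i)

theorem norm_le_of_mem_numRange {B : Matrix (Fin m) (Fin m) ℂ} {z : ℂ} (hz : z ∈ numRange B) :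
    ‖z‖ ≤ ∑ i, ∑ j, ‖B i j‖ := by
  obtain ⟨x, hx, rfl⟩ := hz
  have hxi := norm_le_one_of_star_dotProduct_self_eq_one hx
  have hexpand : star x ⬝ᵥ B *ᵥ x = ∑ i, ∑ j, star (x i) * B i j * x j := by
    simp only [dotProduct, mulVec, Finset.mul_sum, Pi.star_apply, mul_assoc]
  calc ‖star x ⬝ᵥ B *ᵥ x‖ ≤ ∑ i, ∑ j, ‖star (x i) * B i j * x j‖ := by
        rw [hexpand]
        exact (norm_sum_le _ _).trans (Finset.sum_le_sum fun i _ => norm_sum_le _ _)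
    _ ≤ ∑ i, ∑ j, 1 * ‖B i j‖ * 1 := by
        gcongr with i _ j _
        rw [norm_mul, norm_mul, norm_star]
        gcongr
        exacts [hxi i, hxi j]
    _ = ∑ i, ∑ j, ‖B i j‖ := by simp

theorem mem_numRange_of_star_dotProduct_mulVec_eq_mul {B : Matrix (Fin m) (Fin m) ℂ} {z : ℂ}
    {v : Fin m → ℂ} (hv : v ≠ 0) (hz : star v ⬝ᵥ B *ᵥ v = z * (star v ⬝ᵥ v)) :
    z ∈ numRange B := by
  set r : ℝ := ∑ i, ‖v i‖ ^ 2
  have hvv : star v ⬝ᵥ v = r := star_dotProduct_self_eq_sum_sq_norm v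
  have hr : 0 < r := by
    obtain ⟨i, hi⟩ := Function.ne_iff.1 hv
    exact Finset.sum_pos' (fun j _ => by positivity)
      ⟨i, Finset.mem_univ i, pow_pos (norm_pos_iff.2 hi) 2⟩
  set s : ℝ := (√r)⁻¹
  have hs : (s : ℂ) * s * r = 1 := by
    have : s * s * r = 1 := by
      rw [← mul_inv, Real.mul_self_sqrt hr.le, inv_mul_cancel₀ hr.ne']
    exact_mod_cast this
  refine ⟨(s : ℂ) • v, ?_, ?_⟩
  · simp only [star_smul, smul_dotProduct, dotProduct_smul, smul_eq_mul, hvv, Complex.star_def,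
      Complex.conj_ofReal, ← mul_assoc, hs]
  · simp only [star_smul, smul_dotProduct, mulVec_smul, dotProduct_smul, smul_eq_mul, hz, hvv,
      Complex.star_def, Complex.conj_ofReal]
    linear_combination (-z) * hs

theorem bddAbove_norm_numRange (B : Matrix (Fin m) (Fin m) ℂ) :
    BddAbove ((fun z : ℂ => ‖z‖) '' numRange B) :=
  ⟨∑ i, ∑ j, ‖B i j‖, by rintro _ ⟨z, hz, rfl⟩; exact norm_le_of_mem_numRange hz⟩

theorem norm_le_numRadius {B : Matrix (Fin m) (Fin m) ℂ} {z : ℂ} (hz : z ∈ numRange B) :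
    ‖z‖ ≤ numRadius B :=
  le_csSup (bddAbove_norm_numRange B) ⟨z, hz, rfl⟩

theorem numRadius_nonneg (B : Matrix (Fin m) (Fin m) ℂ) : 0 ≤ numRadius B :=
  Real.sSup_nonneg <| by rintro _ ⟨z, -, rfl⟩; exact norm_nonneg z

end NumRange

section RankNumRange

variable {n k m : ℕ} {A : Matrix (Fin n) (Fin n) ℂ} {M : Matrix (Fin n) (Fin m) ℂ}

theorem mem_numRange_of_mem_rankNumRange (hkm : n < k + m) (hM : Mᴴ * M = 1) {l : ℂ}
    (hl : l ∈ rankNumRange A k) : l ∈ numRange (Mᴴ * A * M) := by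
  obtain ⟨X, hX, hXA⟩ := hl
  have hmeet : LinearMap.range X.mulVecLin ⊓ LinearMap.range M.mulVecLin ≠ ⊥ := by
    refine Submodule.inf_ne_bot_of_finrank_lt_add ?_
    rwa [← rank, ← rank, rank_eq_of_mul_eq_one hX, rank_eq_of_mul_eq_one hM, Module.finrank_pi,
      Fintype.card_fin]
  obtain ⟨x, ⟨⟨u, rfl⟩, ⟨v, hv⟩⟩, hx⟩ := (Submodule.ne_bot_iff _).1 hmeet
  simp only [mulVecLin_apply] at hv hx
  have hv0 : v ≠ 0 := by rintro rfl; exact hx (by simpa using hv.symm)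
  have hform : star v ⬝ᵥ (Mᴴ * A * M) *ᵥ v = l * (star v ⬝ᵥ v) := by
    rw [star_dotProduct_conjTranspose_mul_mul_mulVec, hv,
      ← star_dotProduct_conjTranspose_mul_mul_mulVec, hXA,
      ← star_mulVec_dotProduct_mulVec_of_conjTranspose_mul_self hM, hv,
      star_mulVec_dotProduct_mulVec_of_conjTranspose_mul_self hX, smul_mulVec, one_mulVec,
      dotProduct_smul, smul_eq_mul]
  exact mem_numRange_of_star_dotProduct_mulVec_eq_mul hv0 hform

theorem norm_le_numRadius_of_mem_rankNumRange (hkm : n < k + m) (hM : Mᴴ * M = 1) {l : ℂ}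
    (hl : l ∈ rankNumRange A k) : ‖l‖ ≤ numRadius (Mᴴ * A * M) :=
  norm_le_numRadius (mem_numRange_of_mem_rankNumRange hkm hM hl)

theorem sSup_norm_rankNumRange_le_numRadius (hkm : n < k + m) (hM : Mᴴ * M = 1) :
    sSup ((fun z : ℂ => ‖z‖) '' rankNumRange A k) ≤ numRadius (Mᴴ * A * M) :=
  Real.sSup_le
    (by rintro _ ⟨l, hl, rfl⟩; exact norm_le_numRadius_of_mem_rankNumRange hkm hM hl)
    (numRadius_nonneg _)

end RankNumRange

theorem stmt_7 {n k : ℕ} (hk : 1 ≤ k) (hkn : k ≤ n) (A : Matrix (Fin n) (Fin n) ℂ) :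
    (∀ M : Matrix (Fin n) (Fin (n - k + 1)) ℂ, Mᴴ * M = 1 →
       ∀ l ∈ rankNumRange A k, ‖l‖ ≤ numRadius (Mᴴ * A * M)) ∧
    sSup ((fun z : ℂ => ‖z‖) '' rankNumRange A k) ≤
      ⨅ M : {M : Matrix (Fin n) (Fin (n - k + 1)) ℂ // Mᴴ * M = 1},
        numRadius ((M : Matrix (Fin n) (Fin (n - k + 1)) ℂ)ᴴ * A * (M : Matrix (Fin n) (Fin (n - k + 1)) ℂ)) := by
  have hkm : n < k + (n - k + 1) := by omega
  refine ⟨fun M hM l hl => norm_le_numRadius_of_mem_rankNumRange hkm hM hl, ?_⟩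
  obtain ⟨M, hM⟩ := exists_conjTranspose_mul_self_eq_one (R := ℂ) (show n - k + 1 ≤ n by omega)
  have : Nonempty {M : Matrix (Fin n) (Fin (n - k + 1)) ℂ // Mᴴ * M = 1} := ⟨⟨M, hM⟩⟩
  exact le_ciInf fun M => sSup_norm_rankNumRange_le_numRadius hkm M.2
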